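/- Deflation mismatch bound (Wedin-based perturbation of the best rank-1 fit): let Y_k* have leading singular triplet (σ_k*, u_k*, v_k*) and gap T_k* := min{min_{j>k} |σ_k* - σ_j*|, σ_k*} > 0, and let Y_{k,ℓ} be a matrix with ‖Y_{k,ℓ} - Y_k*‖_2 < (1/2) min_{j>k} |σ_k* - σ_j*|, so that Y_{k,ℓ} has a unique top singular triplet (σ_{1_k,ℓ}, u_{1_k,ℓ}, v_{1_k,ℓ}). Then ‖σ_{1_k,ℓ} u_{1_k,ℓ} v_{1_k,ℓ}ᵀ - σ_k* u_k* v_k*ᵀ‖_F ≤ C_k ‖Y_{k,ℓ} - Y_k*‖_F with C_k := 3σ_k*/T_k* + 1; equivalently, the deflation mismatch satisfies B_{k,ℓ} ≤ C_k ‖Y_{k,ℓ} - Y_k*‖_F. -/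

import Mathlib

open Matrix

/-- Euclidean norm of a real vector. -/
noncomputable def euclNorm {n : ℕ} (x : Fin n → ℝ) : ℝ :=
  Real.sqrt (∑ i, x i ^ 2)

/-- Frobenius norm of a real matrix. -/
noncomputable def frobNorm {m n : ℕ} (A : Matrix (Fin m) (Fin n) ℝ) : ℝ :=
  Real.sqrt (∑ i, ∑ j, A i j ^ 2)

/-- Spectral (ℓ₂ operator) norm of a real matrix. -/
noncomputable def specNorm {m n : ℕ} (A : Matrix (Fin m) (Fin n) ℝ) : ℝ :=
  sSup {c : ℝ | ∃ x : Fin n → ℝ, euclNorm x ≤ 1 ∧ c = euclNorm (A.mulVec x)}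

/-!
Write `v₁ = ⟨v*, v₁⟩ v* + q` and `u₁ = ⟨u*, u₁⟩ u* + p` with `q ⊥ v*`, `p ⊥ u*`, and let
`σ₂ = ‖Y* - σ* u* v*ᵀ‖₂`. Since `Y* - σ* u* v*ᵀ` is `Y*` followed by the projection away from `u*`
(and preceded by the projection away from `v*`), projecting `Y v₁ = σ̂ u₁` and `Yᵀ u₁ = σ̂ v₁`
gives Wedin's cross bounds `σ̂ ‖p‖ ≤ σ₂ ‖q‖ + ‖E‖_F` and `σ̂ ‖q‖ ≤ σ₂ ‖p‖ + ‖E‖_F`, `E = Y - Y*`,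
hence `(σ̂ - σ₂) ‖q‖ ≤ ‖E‖_F`. By Weyl, `σ̂ ≥ σ* - ‖E‖₂`, so the perturbation condition
gives `σ̂ - σ₂ > T/2` and `T ‖q‖ ≤ 2 ‖E‖_F`. Finally
`σ̂ u₁v₁ᵀ - σ* u*v*ᵀ = (E v₁) v₁ᵀ + Y* (v₁v₁ᵀ - v*v*ᵀ)`, and `‖v₁v₁ᵀ - v*v*ᵀ‖_F = √2 ‖q‖`,
so the mismatch is at most `‖E‖_F + √2 σ* ‖q‖ ≤ (3σ*/T + 1) ‖E‖_F`.
-/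

variable {m n k : ℕ}

lemma euclNorm_eq_norm (x : Fin n → ℝ) : euclNorm x = ‖WithLp.toLp 2 x‖ := by
  simp [euclNorm, EuclideanSpace.norm_eq]

lemma euclNorm_sq (x : Fin n → ℝ) : euclNorm x ^ 2 = x ⬝ᵥ x := by
  rw [euclNorm, Real.sq_sqrt (by positivity)]
  simp [dotProduct, sq]

lemma euclNorm_nonneg (x : Fin n → ℝ) : 0 ≤ euclNorm x := Real.sqrt_nonneg _

lemma dotProduct_self_eq_one {x : Fin n → ℝ} (hx : euclNorm x = 1) : x ⬝ᵥ x = 1 := by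
  rw [← euclNorm_sq, hx, one_pow]

lemma euclNorm_add_le (x y : Fin n → ℝ) : euclNorm (x + y) ≤ euclNorm x + euclNorm y := by
  simpa only [euclNorm_eq_norm, WithLp.toLp_add] using norm_add_le _ _

lemma euclNorm_smul (c : ℝ) (x : Fin n → ℝ) : euclNorm (c • x) = |c| * euclNorm x := by
  simp only [euclNorm_eq_norm, WithLp.toLp_smul, norm_smul, Real.norm_eq_abs]

section Frobenius

attribute [local instance] Matrix.frobeniusNormedAddCommGroup

lemma frobNorm_eq_norm (A : Matrix (Fin m) (Fin n) ℝ) : frobNorm A = ‖A‖ := by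
  rw [frobNorm, frobenius_norm_def, Real.sqrt_eq_rpow]
  simp

lemma frobNorm_add_le (A B : Matrix (Fin m) (Fin n) ℝ) :
    frobNorm (A + B) ≤ frobNorm A + frobNorm B := by
  simpa only [frobNorm_eq_norm] using norm_add_le A B

lemma frobNorm_transpose (A : Matrix (Fin m) (Fin n) ℝ) : frobNorm Aᵀ = frobNorm A := by
  simp only [frobNorm_eq_norm, frobenius_norm_transpose]

lemma euclNorm_mulVec_le_frobNorm (A : Matrix (Fin m) (Fin n) ℝ) (x : Fin n → ℝ) :
    euclNorm (A *ᵥ x) ≤ frobNorm A * euclNorm x := by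
  have h := frobenius_norm_mul A (replicateCol Unit x)
  rw [← replicateCol_mulVec] at h
  simp only [frobenius_norm_replicateCol] at h
  rwa [← euclNorm_eq_norm, ← euclNorm_eq_norm, ← frobNorm_eq_norm] at h

end Frobenius

section L2

open scoped Matrix.Norms.L2Operator

lemma specNorm_eq_norm (A : Matrix (Fin m) (Fin n) ℝ) : specNorm A = ‖A‖ := by
  rw [l2_opNorm_def, ← ContinuousLinearMap.sSup_unitClosedBall_eq_norm, specNorm]
  congr 1
  ext c
  constructor
  · rintro ⟨x, hx, rfl⟩
    exact ⟨WithLp.toLp 2 x, by simpa [euclNorm_eq_norm] using hx, by simp [euclNorm_eq_norm]⟩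
  · rintro ⟨x, hx, rfl⟩
    exact ⟨x.ofLp, by simpa [euclNorm_eq_norm] using hx,
      by simp [euclNorm_eq_norm, toLpLin_apply]⟩

lemma specNorm_nonneg (A : Matrix (Fin m) (Fin n) ℝ) : 0 ≤ specNorm A := by
  simpa only [specNorm_eq_norm] using norm_nonneg A

lemma euclNorm_mulVec_le_specNorm (A : Matrix (Fin m) (Fin n) ℝ) (x : Fin n → ℝ) :
    euclNorm (A *ᵥ x) ≤ specNorm A * euclNorm x := by
  rw [euclNorm_eq_norm, euclNorm_eq_norm, specNorm_eq_norm]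
  exact l2_opNorm_mulVec A (WithLp.toLp 2 x)

lemma specNorm_transpose (A : Matrix (Fin m) (Fin n) ℝ) : specNorm Aᵀ = specNorm A := by
  simpa only [specNorm_eq_norm, conjTranspose_eq_transpose_of_trivial]
    using l2_opNorm_conjTranspose A

lemma specNorm_le_add_specNorm_sub (A B : Matrix (Fin m) (Fin n) ℝ) :
    specNorm A ≤ specNorm B + specNorm (B - A) := by
  simpa only [specNorm_eq_norm] using norm_le_insert B A

end L2

lemma frobNorm_nonneg (A : Matrix (Fin m) (Fin n) ℝ) : 0 ≤ frobNorm A := Real.sqrt_nonneg _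

lemma frobNorm_sq (A : Matrix (Fin m) (Fin n) ℝ) : frobNorm A ^ 2 = ∑ i, ∑ j, A i j ^ 2 :=
  Real.sq_sqrt (by positivity)

lemma frobNorm_sq_eq_sum_euclNorm_sq (A : Matrix (Fin m) (Fin n) ℝ) :
    frobNorm A ^ 2 = ∑ i, euclNorm (A i) ^ 2 := by
  simp only [frobNorm_sq, euclNorm_sq, dotProduct, ← sq]

lemma frobNorm_mul_le_specNorm_mul (A : Matrix (Fin m) (Fin n) ℝ)
    (M : Matrix (Fin n) (Fin k) ℝ) :
    frobNorm (A * M) ≤ specNorm A * frobNorm M := by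
  have hcol : ∀ j, (A * M)ᵀ j = A *ᵥ Mᵀ j := fun j => by
    ext i; simp [mul_apply, mulVec, dotProduct]
  rw [← pow_le_pow_iff_left₀ (frobNorm_nonneg _)
    (mul_nonneg (specNorm_nonneg A) (frobNorm_nonneg _)) two_ne_zero,
    ← frobNorm_transpose, ← frobNorm_transpose M, mul_pow,
    frobNorm_sq_eq_sum_euclNorm_sq, frobNorm_sq_eq_sum_euclNorm_sq, Finset.mul_sum]
  refine Finset.sum_le_sum fun j _ => ?_
  rw [hcol, ← mul_pow]
  exact pow_le_pow_left₀ (euclNorm_nonneg _) (euclNorm_mulVec_le_specNorm A _) 2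

lemma frobNorm_vecMulVec (a : Fin m → ℝ) (b : Fin n → ℝ) :
    frobNorm (vecMulVec a b) = euclNorm a * euclNorm b := by
  rw [frobNorm, euclNorm, euclNorm, ← Real.sqrt_mul (by positivity), Finset.sum_mul_sum]
  simp only [vecMulVec_apply, mul_pow]

/-- The component of `x` orthogonal to `u`, when `u` is a unit vector. -/
def orthComponent (u x : Fin n → ℝ) : Fin n → ℝ := x - (u ⬝ᵥ x) • u

lemma orthComponent_add (u x y : Fin n → ℝ) :
    orthComponent u (x + y) = orthComponent u x + orthComponent u y := by
  simp only [orthComponent, dotProduct_add, add_smul]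
  abel

lemma orthComponent_smul (u x : Fin n → ℝ) (c : ℝ) :
    orthComponent u (c • x) = c • orthComponent u x := by
  simp only [orthComponent, dotProduct_smul, smul_eq_mul, smul_sub, mul_smul]

lemma euclNorm_orthComponent_sq {u : Fin n → ℝ} (hu : euclNorm u = 1) (x : Fin n → ℝ) :
    euclNorm (orthComponent u x) ^ 2 = euclNorm x ^ 2 - (u ⬝ᵥ x) ^ 2 := by
  simp only [euclNorm_sq, orthComponent, sub_dotProduct, dotProduct_sub, smul_dotProduct,
    dotProduct_smul, smul_eq_mul, dotProduct_self_eq_one hu, dotProduct_comm x u]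
  ring

lemma euclNorm_orthComponent_le {u : Fin n → ℝ} (hu : euclNorm u = 1) (x : Fin n → ℝ) :
    euclNorm (orthComponent u x) ≤ euclNorm x := by
  rw [← pow_le_pow_iff_left₀ (euclNorm_nonneg _) (euclNorm_nonneg _) two_ne_zero,
    euclNorm_orthComponent_sq hu]
  linarith [sq_nonneg (u ⬝ᵥ x)]

lemma frobNorm_vecMulVec_self_sub {u v : Fin n → ℝ} (hu : euclNorm u = 1)
    (hv : euclNorm v = 1) :
    frobNorm (vecMulVec v v - vecMulVec u u) = √2 * euclNorm (orthComponent u v) := by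
  rw [← pow_left_inj₀ (frobNorm_nonneg _)
    (mul_nonneg (Real.sqrt_nonneg _) (euclNorm_nonneg _)) two_ne_zero, mul_pow,
    Real.sq_sqrt zero_le_two, euclNorm_orthComponent_sq hu, hv, frobNorm_sq]
  have hsum : ∀ i j, (vecMulVec v v - vecMulVec u u) i j ^ 2
      = v i ^ 2 * v j ^ 2 - 2 * (u i * v i) * (u j * v j) + u i ^ 2 * u j ^ 2 := by
    intro i j
    simp only [Matrix.sub_apply, vecMulVec_apply]
    ring
  simp only [hsum, Finset.sum_add_distrib, Finset.sum_sub_distrib, ← Finset.mul_sum,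
    ← Finset.sum_mul]
  have hu' : ∑ i, u i ^ 2 = 1 := by simpa [dotProduct, sq] using dotProduct_self_eq_one hu
  have hv' : ∑ i, v i ^ 2 = 1 := by simpa [dotProduct, sq] using dotProduct_self_eq_one hv
  rw [hu', hv', dotProduct]
  ring

lemma orthComponent_mulVec {Y₀ : Matrix (Fin m) (Fin n) ℝ} {σ₀ : ℝ} {u₀ : Fin m → ℝ}
    {v₀ : Fin n → ℝ} (hv₀ : euclNorm v₀ = 1) (hY₀v₀ : Y₀ *ᵥ v₀ = σ₀ • u₀)
    (hY₀u₀ : Y₀ᵀ *ᵥ u₀ = σ₀ • v₀) (v : Fin n → ℝ) :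
    orthComponent u₀ (Y₀ *ᵥ v) = (Y₀ - σ₀ • vecMulVec u₀ v₀) *ᵥ orthComponent v₀ v := by
  simp only [orthComponent, mulVec_sub, sub_mulVec, mulVec_smul, smul_mulVec, hY₀v₀,
    vecMulVec_mulVec, op_smul_eq_smul, dotProduct_self_eq_one hv₀, dotProduct_mulVec,
    ← mulVec_transpose, hY₀u₀, smul_dotProduct, smul_eq_mul]
  module

section Wedin

variable {Y₀ Y : Matrix (Fin m) (Fin n) ℝ} {σ₀ σ : ℝ} {u₀ u : Fin m → ℝ} {v₀ v : Fin n → ℝ}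

lemma mul_euclNorm_orthComponent_le (hu₀ : euclNorm u₀ = 1) (hv₀ : euclNorm v₀ = 1)
    (hv : euclNorm v = 1) (hσ : 0 ≤ σ) (hY₀v₀ : Y₀ *ᵥ v₀ = σ₀ • u₀)
    (hY₀u₀ : Y₀ᵀ *ᵥ u₀ = σ₀ • v₀) (hYv : Y *ᵥ v = σ • u) :
    σ * euclNorm (orthComponent u₀ u)
      ≤ specNorm (Y₀ - σ₀ • vecMulVec u₀ v₀) * euclNorm (orthComponent v₀ v)
        + frobNorm (Y - Y₀) := by
  have hsplit : σ • orthComponent u₀ u = (Y₀ - σ₀ • vecMulVec u₀ v₀) *ᵥ orthComponent v₀ v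
      + orthComponent u₀ ((Y - Y₀) *ᵥ v) := by
    rw [← orthComponent_mulVec hv₀ hY₀v₀ hY₀u₀, ← orthComponent_add, ← add_mulVec,
      add_sub_cancel, hYv, orthComponent_smul]
  have hres : euclNorm (orthComponent u₀ ((Y - Y₀) *ᵥ v)) ≤ frobNorm (Y - Y₀) :=
    calc _ ≤ euclNorm ((Y - Y₀) *ᵥ v) := euclNorm_orthComponent_le hu₀ _
      _ ≤ frobNorm (Y - Y₀) := by simpa [hv] using euclNorm_mulVec_le_frobNorm (Y - Y₀) v
  calc σ * euclNorm (orthComponent u₀ u) = euclNorm (σ • orthComponent u₀ u) := by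
        rw [euclNorm_smul, abs_of_nonneg hσ]
    _ ≤ _ := by
        rw [hsplit]
        exact (euclNorm_add_le _ _).trans
          (add_le_add (euclNorm_mulVec_le_specNorm _ _) hres)

-- Multiply the two bounds by `s` and `σ` and add: `(σ² - s²) b ≤ (σ + s) e`.
lemma sub_mul_le_of_cross_le {σ s a b e : ℝ} (hs : 0 ≤ s) (hsσ : s < σ)
    (ha : σ * a ≤ s * b + e) (hb : σ * b ≤ s * a + e) : (σ - s) * b ≤ e := by
  nlinarith [mul_le_mul_of_nonneg_left ha hs, mul_le_mul_of_nonneg_left hb (hs.trans hsσ.le)]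

theorem sub_specNorm_mul_euclNorm_orthComponent_le (hu₀ : euclNorm u₀ = 1)
    (hv₀ : euclNorm v₀ = 1) (hu : euclNorm u = 1) (hv : euclNorm v = 1)
    (hY₀v₀ : Y₀ *ᵥ v₀ = σ₀ • u₀) (hY₀u₀ : Y₀ᵀ *ᵥ u₀ = σ₀ • v₀)
    (hYv : Y *ᵥ v = σ • u) (hYu : Yᵀ *ᵥ u = σ • v)
    (hgap : specNorm (Y₀ - σ₀ • vecMulVec u₀ v₀) < σ) :
    (σ - specNorm (Y₀ - σ₀ • vecMulVec u₀ v₀)) * euclNorm (orthComponent v₀ v)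
      ≤ frobNorm (Y - Y₀) := by
  have hσ : 0 ≤ σ := (specNorm_nonneg _).trans hgap.le
  have hleft := mul_euclNorm_orthComponent_le hu₀ hv₀ hv hσ hY₀v₀ hY₀u₀ hYv
  have hright := mul_euclNorm_orthComponent_le (Y₀ := Y₀ᵀ) hv₀ hu₀ hu hσ hY₀u₀
    (by rwa [transpose_transpose]) hYu
  rw [← transpose_vecMulVec, ← transpose_smul, ← transpose_sub, specNorm_transpose,
    ← transpose_sub, frobNorm_transpose] at hright
  exact sub_mul_le_of_cross_le (specNorm_nonneg _) hgap hleft hright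

end Wedin

lemma smul_vecMulVec_sub_smul_vecMulVec {Y₀ Y : Matrix (Fin m) (Fin n) ℝ} {σ₀ σ : ℝ}
    {u₀ u : Fin m → ℝ} {v₀ v : Fin n → ℝ} (hY₀v₀ : Y₀ *ᵥ v₀ = σ₀ • u₀) (hYv : Y *ᵥ v = σ • u) :
    σ • vecMulVec u v - σ₀ • vecMulVec u₀ v₀
      = vecMulVec ((Y - Y₀) *ᵥ v) v + Y₀ * (vecMulVec v v - vecMulVec v₀ v₀) := by
  rw [Matrix.mul_sub, mul_vecMulVec, mul_vecMulVec, hY₀v₀, sub_mulVec, hYv, sub_vecMulVec,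
    smul_vecMulVec, smul_vecMulVec]
  abel

theorem frobNorm_smul_vecMulVec_sub_le {Y₀ Y : Matrix (Fin m) (Fin n) ℝ} {σ₀ σ : ℝ}
    {u₀ u : Fin m → ℝ} {v₀ v : Fin n → ℝ} (hv₀ : euclNorm v₀ = 1) (hv : euclNorm v = 1)
    (hY₀v₀ : Y₀ *ᵥ v₀ = σ₀ • u₀) (hYv : Y *ᵥ v = σ • u) :
    frobNorm (σ • vecMulVec u v - σ₀ • vecMulVec u₀ v₀)
      ≤ frobNorm (Y - Y₀) + specNorm Y₀ * (√2 * euclNorm (orthComponent v₀ v)) := by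
  rw [smul_vecMulVec_sub_smul_vecMulVec hY₀v₀ hYv]
  refine (frobNorm_add_le _ _).trans (add_le_add ?_ ?_)
  · simpa [frobNorm_vecMulVec, hv] using euclNorm_mulVec_le_frobNorm (Y - Y₀) v
  · exact (frobNorm_mul_le_specNorm_mul Y₀ _).trans_eq
      (by rw [frobNorm_vecMulVec_self_sub hv₀ hv])

theorem deflation_mismatch_bound_general
    (m n : ℕ) (Ykstar Ykl : Matrix (Fin m) (Fin n) ℝ)
    (σk σ1kl Tk : ℝ)
    (ustar u1 : Fin m → ℝ) (vstar v1 : Fin n → ℝ)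
    (hustar : euclNorm ustar = 1) (hvstar : euclNorm vstar = 1)
    (hu1 : euclNorm u1 = 1) (hv1 : euclNorm v1 = 1)
    -- (σ_k*, u_k*, v_k*) is the leading singular triplet of Y_k*
    (hσtop : σk = specNorm Ykstar)
    (hMv : Ykstar.mulVec vstar = σk • ustar)
    (hMTu : Ykstar.transpose.mulVec ustar = σk • vstar)
    -- the gap T_k* = min{σ_k* - σ₂(Y_k*), σ_k*}
    (hT : Tk = min (σk - specNorm (Ykstar - σk • Matrix.vecMulVec ustar vstar)) σk)
    (hTpos : 0 < Tk)
    -- (σ_{1_k,ℓ}, u_{1_k,ℓ}, v_{1_k,ℓ}) is the top singular triplet of Y_{k,ℓ}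
    (hσ1kl : σ1kl = specNorm Ykl)
    (hMv' : Ykl.mulVec v1 = σ1kl • u1)
    (hMTu' : Ykl.transpose.mulVec u1 = σ1kl • v1)
    -- perturbation condition
    (hpert : specNorm (Ykl - Ykstar)
      < (σk - specNorm (Ykstar - σk • Matrix.vecMulVec ustar vstar)) / 2) :
    frobNorm (σ1kl • Matrix.vecMulVec u1 v1 - σk • Matrix.vecMulVec ustar vstar)
      ≤ (3 * σk / Tk + 1) * frobNorm (Ykl - Ykstar) := by
  set σ₂ := specNorm (Ykstar - σk • vecMulVec ustar vstar)
  set q := orthComponent vstar v1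
  have hweyl : σk ≤ σ1kl + specNorm (Ykl - Ykstar) :=
    hσtop ▸ hσ1kl ▸ specNorm_le_add_specNorm_sub Ykstar Ykl
  have hTle : Tk ≤ σk - σ₂ := hT ▸ min_le_left _ _
  have hgap : Tk < 2 * (σ1kl - σ₂) := by linarith
  have hsin : (σ1kl - σ₂) * euclNorm q ≤ frobNorm (Ykl - Ykstar) :=
    sub_specNorm_mul_euclNorm_orthComponent_le hustar hvstar hu1 hv1 hMv hMTu hMv' hMTu'
      (by linarith)
  have hq : euclNorm q ≤ 2 * frobNorm (Ykl - Ykstar) / Tk := by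
    rw [le_div_iff₀ hTpos]
    calc euclNorm q * Tk ≤ euclNorm q * (2 * (σ1kl - σ₂)) :=
          mul_le_mul_of_nonneg_left hgap.le (euclNorm_nonneg q)
      _ ≤ 2 * frobNorm (Ykl - Ykstar) := by linarith
  have hσk : 0 ≤ σk := hσtop ▸ specNorm_nonneg _
  have hsqrt2 : √2 ≤ 3 / 2 := by
    rw [Real.sqrt_le_left (by norm_num)]
    norm_num
  calc _ ≤ frobNorm (Ykl - Ykstar) + σk * (√2 * euclNorm q) :=
        (frobNorm_smul_vecMulVec_sub_le hvstar hv1 hMv hMv').trans_eq (by rw [← hσtop])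
    _ ≤ frobNorm (Ykl - Ykstar) + σk * (3 / 2 * (2 * frobNorm (Ykl - Ykstar) / Tk)) := by
        gcongr
        exact euclNorm_nonneg q
    _ = (3 * σk / Tk + 1) * frobNorm (Ykl - Ykstar) := by
        field_simp
        ring

/-- **Deflation mismatch bound, Wedin-based.**
Let the clean target `Y_k*` have leading singular triplet `(σ_k*, u_k*, v_k*)` and gap
`T_k* = min {min_{j>k} |σ_k* - σ_j*|, σ_k*} = min {σ_k* - σ₂(Y_k*), σ_k*} > 0`, and let
`Y_{k,ℓ}` be a matrix with `‖Y_{k,ℓ} - Y_k*‖₂ < (1/2) (σ_k* - σ₂(Y_k*))`, so that `Y_{k,ℓ}`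
has a unique top singular triplet `(σ_{1_k,ℓ}, u_{1_k,ℓ}, v_{1_k,ℓ})`.  Then the deflation
mismatch (the Frobenius distance between the top singular components) satisfies
`‖σ_{1_k,ℓ} u_{1_k,ℓ} v_{1_k,ℓ}ᵀ - σ_k* u_k* v_k*ᵀ‖_F ≤ C_k ‖Y_{k,ℓ} - Y_k*‖_F`
with `C_k = 3σ_k*/T_k* + 1`. -/
theorem deflation_mismatch_bound
    (m n : ℕ) (Ykstar Ykl : Matrix (Fin m) (Fin n) ℝ)
    (σk σ1kl Tk : ℝ)
    (ustar u1 : Fin m → ℝ) (vstar v1 : Fin n → ℝ)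
    (hustar : euclNorm ustar = 1) (hvstar : euclNorm vstar = 1)
    (hu1 : euclNorm u1 = 1) (hv1 : euclNorm v1 = 1)
    -- (σ_k*, u_k*, v_k*) is the leading singular triplet of Y_k*
    (hσtop : σk = specNorm Ykstar) (hσpos : 0 < σk)
    (hMv : Ykstar.mulVec vstar = σk • ustar)
    (hMTu : Ykstar.transpose.mulVec ustar = σk • vstar)
    -- the gap T_k* = min{σ_k* - σ₂(Y_k*), σ_k*}
    (hT : Tk = min (σk - specNorm (Ykstar - σk • Matrix.vecMulVec ustar vstar)) σk)
    (hTpos : 0 < Tk)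
    -- (σ_{1_k,ℓ}, u_{1_k,ℓ}, v_{1_k,ℓ}) is the top singular triplet of Y_{k,ℓ}
    (hσ1kl : σ1kl = specNorm Ykl)
    (hMv' : Ykl.mulVec v1 = σ1kl • u1)
    (hMTu' : Ykl.transpose.mulVec u1 = σ1kl • v1)
    -- perturbation condition
    (hpert : specNorm (Ykl - Ykstar)
      < (σk - specNorm (Ykstar - σk • Matrix.vecMulVec ustar vstar)) / 2) :
    frobNorm (σ1kl • Matrix.vecMulVec u1 v1 - σk • Matrix.vecMulVec ustar vstar)
      ≤ (3 * σk / Tk + 1) * frobNorm (Ykl - Ykstar) :=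
  deflation_mismatch_bound_general m n Ykstar Ykl σk σ1kl Tk ustar u1 vstar v1 hustar hvstar hu1 hv1
    hσtop hMv hMTu hT hTpos hσ1kl hMv' hMTu' hpert
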